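/- arXiv:1709.08565 — 2 statements merged into one kernel-verified Lean document; each statement's English description precedes it below -/
import Mathlib

section
/- Let m ≥ 1, s ∈ (0,1), p ∈ [1,∞), let M be ℝ^m, let N be a metric space, let I be a countable index set, and for each i ∈ I let u_i : M → N be measurable. Suppose there exist b ∈ N and a collection (A_i)_{i∈I} of open subsets of M with pairwise disjoint closures such that u_i(x) = b for every x ∈ M \ A_i. Define u : M → N by u(x) = u_i(x) if x ∈ A_i for some i, and u(x) = b otherwise. Then E_{s,p}(u, M) ≤ 2^p · Σ_{i∈I} E_{s,p}(u_i, M). -/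
/-!
If `x ∈ A i` and `y ∉ A i`, then `v i y = b`, so the triangle inequality through `b` gives
`d(u x, u y) ≤ d(v i x, v i y) + d(b, u y)`, and the last term vanishes unless `y` lies in some
`A j` with `x ∉ A j`; if `x` lies in no piece, `d(u x, u y) = d(b, u y)`. With
`(a + c) ^ p ≤ 2 ^ (p - 1) (a ^ p + c ^ p)` this bounds the energy of `u` by `2 ^ (p - 1)` times
the parts of the energies of the `v i` with `x ∈ A i`, plus the cross term
`∑ j ∫_{x ∉ A j} ∫_{y ∈ A j} d(b, v j y) ^ p k(x, y)`. As `v j x = b` for `x ∉ A j`, the cross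
term is at most the remaining parts of the energies, those with `x ∉ A j`.
-/

open MeasureTheory ENNReal

/-- The Gagliardo energy of a map `u` into a metric space `N` on a set `A ⊆ ℝ^m`. -/
noncomputable def gagliardoEnergy {m : ℕ} {N : Type} [PseudoMetricSpace N] (s p : ℝ)
    (u : EuclideanSpace ℝ (Fin m) → N) (A : Set (EuclideanSpace ℝ (Fin m))) : ℝ≥0∞ :=
  ∫⁻ x in A, ∫⁻ y in A,
    ENNReal.ofReal (dist (u x) (u y) ^ p / ‖x - y‖ ^ ((m : ℝ) + s * p))

open Function Set

section Patching

variable {X ι N : Type*} [PseudoEMetricSpace N]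

structure IsPatching (A : ι → Set X) (v : ι → X → N) (b : N) (u : X → N) : Prop where
  pairwise_disjoint : Pairwise (Disjoint on A)
  apply_of_notMem : ∀ i, ∀ x ∉ A i, v i x = b
  apply_of_mem : ∀ i, ∀ x ∈ A i, u x = v i x
  apply_of_notMem_iUnion : ∀ x ∉ ⋃ i, A i, u x = b

/-- Here `b` stands for `v j x` with `x ∉ A j`: this keeps the integrand jointly measurable even
when `N` is not separable. -/
noncomputable def crossTerm (A : ι → Set X) (v : ι → X → N) (b : N) (p : ℝ)
    (k : X → X → ℝ≥0∞) (x y : X) : ℝ≥0∞ :=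
  ∑' j, ((A j)ᶜ ×ˢ A j).indicator (fun z => edist b (v j z.2) ^ p * k z.1 z.2) (x, y)

variable {A : ι → Set X} {v : ι → X → N} {b : N} {u : X → N} {p : ℝ} {k : X → X → ℝ≥0∞}

theorem one_le_two_rpow_sub_one {p : ℝ} (hp : 1 ≤ p) : (1 : ℝ≥0∞) ≤ 2 ^ (p - 1) := by
  simpa using ENNReal.rpow_le_rpow_of_exponent_le one_le_two (sub_nonneg.2 hp)

theorem IsPatching.edist_rpow_mul_le_crossTerm (h : IsPatching A v b u) (hp : 0 < p) {x y : X}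
    (hxy : ∀ j, x ∈ A j → y ∉ A j) : edist b (u y) ^ p * k x y ≤ crossTerm A v b p k x y := by
  by_cases hy : y ∈ ⋃ j, A j
  · obtain ⟨j, hyj⟩ := mem_iUnion.mp hy
    have hmem : (x, y) ∈ (A j)ᶜ ×ˢ A j := ⟨fun hxj => hxy j hxj hyj, hyj⟩
    calc edist b (u y) ^ p * k x y
        = ((A j)ᶜ ×ˢ A j).indicator (fun z => edist b (v j z.2) ^ p * k z.1 z.2) (x, y) := by
          rw [indicator_of_mem hmem, h.apply_of_mem j y hyj]
      _ ≤ crossTerm A v b p k x y := ENNReal.le_tsum j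
  · simp [h.apply_of_notMem_iUnion y hy, ENNReal.zero_rpow_of_pos hp]

theorem IsPatching.edist_rpow_mul_le_of_mem (h : IsPatching A v b u) (hp : 1 ≤ p) {i : ι}
    {x : X} (hx : x ∈ A i) (y : X) :
    edist (u x) (u y) ^ p * k x y ≤
      2 ^ (p - 1) * (edist (v i x) (v i y) ^ p * k x y + crossTerm A v b p k x y) := by
  by_cases hy : y ∈ A i
  · rw [h.apply_of_mem i x hx, h.apply_of_mem i y hy]
    exact le_mul_of_one_le_of_le (one_le_two_rpow_sub_one hp) le_self_add
  have hxy : ∀ j, x ∈ A j → y ∉ A j := fun j hxj hyj =>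
    hy (h.pairwise_disjoint.eq (not_disjoint_iff.2 ⟨x, hxj, hx⟩) ▸ hyj)
  have htri : edist (u x) (u y) ≤ edist (v i x) (v i y) + edist b (u y) :=
    calc edist (u x) (u y) = edist (v i x) (u y) := by rw [h.apply_of_mem i x hx]
      _ ≤ edist (v i x) b + edist b (u y) := edist_triangle _ _ _
      _ = edist (v i x) (v i y) + edist b (u y) := by rw [h.apply_of_notMem i y hy]
  calc edist (u x) (u y) ^ p * k x y
      ≤ (edist (v i x) (v i y) + edist b (u y)) ^ p * k x y := by gcongr
    _ ≤ 2 ^ (p - 1) * (edist (v i x) (v i y) ^ p + edist b (u y) ^ p) * k x y := by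
        gcongr; exact ENNReal.rpow_add_le_mul_rpow_add_rpow _ _ hp
    _ = 2 ^ (p - 1) * (edist (v i x) (v i y) ^ p * k x y + edist b (u y) ^ p * k x y) := by
        ring
    _ ≤ _ := by gcongr; exact h.edist_rpow_mul_le_crossTerm (by linarith) hxy

variable [MeasurableSpace X] {μ : Measure X}

noncomputable def kernelEnergy (μ : Measure X) (k : X → X → ℝ≥0∞) (p : ℝ) (v : X → N) : ℝ≥0∞ :=
  ∫⁻ x, ∫⁻ y, edist (v x) (v y) ^ p * k x y ∂μ ∂μ

theorem lintegral_eq_tsum_setLIntegral_add_compl [Countable ι] (hA : ∀ i, MeasurableSet (A i))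
    (hd : Pairwise (Disjoint on A)) (f : X → ℝ≥0∞) :
    ∫⁻ x, f x ∂μ = ∑' i, ∫⁻ x in A i, f x ∂μ + ∫⁻ x in (⋃ i, A i)ᶜ, f x ∂μ := by
  rw [← lintegral_iUnion hA hd, lintegral_add_compl _ (MeasurableSet.iUnion hA)]

theorem IsPatching.lintegral_le_of_notMem_iUnion (h : IsPatching A v b u) (hp : 0 < p) {x : X}
    (hx : x ∉ ⋃ i, A i) :
    ∫⁻ y, edist (u x) (u y) ^ p * k x y ∂μ ≤ ∫⁻ y, crossTerm A v b p k x y ∂μ := by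
  refine lintegral_mono fun y => ?_
  rw [h.apply_of_notMem_iUnion x hx]
  exact h.edist_rpow_mul_le_crossTerm hp fun j hxj => absurd (mem_iUnion_of_mem j hxj) hx

variable [MeasurableSpace N] [OpensMeasurableSpace N]

theorem measurable_crossTerm [Countable ι] (hA : ∀ j, MeasurableSet (A j))
    (hv : ∀ j, Measurable (v j)) (hk : Measurable (uncurry k)) :
    Measurable (uncurry (crossTerm A v b p k)) :=
  Measurable.tsum fun j => Measurable.indicator
    (((measurable_edist_right.comp ((hv j).comp measurable_snd)).pow_const p).mul hk)
    ((hA j).compl.prod (hA j))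

theorem lintegral_lintegral_crossTerm [SFinite μ] [Countable ι] (hA : ∀ j, MeasurableSet (A j))
    (hv : ∀ j, Measurable (v j)) (hk : Measurable (uncurry k)) :
    ∫⁻ x, ∫⁻ y, crossTerm A v b p k x y ∂μ ∂μ =
      ∑' j, ∫⁻ x in (A j)ᶜ, ∫⁻ y in A j, edist b (v j y) ^ p * k x y ∂μ ∂μ := by
  have hf : ∀ j, Measurable fun z : X × X => edist b (v j z.2) ^ p * k z.1 z.2 := fun j =>
    ((measurable_edist_right.comp ((hv j).comp measurable_snd)).pow_const p).mul hk
  rw [lintegral_lintegral (measurable_crossTerm hA hv hk).aemeasurable]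
  simp only [crossTerm, Prod.mk.eta]
  rw [lintegral_tsum fun j => ((hf j).indicator ((hA j).compl.prod (hA j))).aemeasurable]
  refine tsum_congr fun j => ?_
  rw [lintegral_indicator ((hA j).compl.prod (hA j)), setLIntegral_prod _ (hf j).aemeasurable]


theorem IsPatching.lintegral_lintegral_crossTerm_le [SFinite μ] [Countable ι]
    (h : IsPatching A v b u) (hA : ∀ j, MeasurableSet (A j)) (hv : ∀ j, Measurable (v j))
    (hk : Measurable (uncurry k)) :
    ∫⁻ x, ∫⁻ y, crossTerm A v b p k x y ∂μ ∂μ ≤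
      ∑' j, ∫⁻ x in (A j)ᶜ, ∫⁻ y, edist (v j x) (v j y) ^ p * k x y ∂μ ∂μ := by
  rw [lintegral_lintegral_crossTerm hA hv hk]
  refine ENNReal.tsum_le_tsum fun j => setLIntegral_mono' (hA j).compl fun x hx => ?_
  calc ∫⁻ y in A j, edist b (v j y) ^ p * k x y ∂μ
      = ∫⁻ y in A j, edist (v j x) (v j y) ^ p * k x y ∂μ := by
        rw [h.apply_of_notMem j x hx]
    _ ≤ ∫⁻ y, edist (v j x) (v j y) ^ p * k x y ∂μ := setLIntegral_le_lintegral _ _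

theorem IsPatching.lintegral_le_of_mem (h : IsPatching A v b u) (hp : 1 ≤ p) {i : ι}
    (hv : Measurable (v i)) (hk : Measurable (uncurry k)) {x : X} (hx : x ∈ A i) :
    ∫⁻ y, edist (u x) (u y) ^ p * k x y ∂μ ≤
      2 ^ (p - 1) * (∫⁻ y, edist (v i x) (v i y) ^ p * k x y ∂μ +
        ∫⁻ y, crossTerm A v b p k x y ∂μ) := by
  have hmeas : Measurable fun y => edist (v i x) (v i y) ^ p * k x y :=
    ((measurable_edist_right.comp hv).pow_const p).mul (hk.comp measurable_prodMk_left)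
  calc ∫⁻ y, edist (u x) (u y) ^ p * k x y ∂μ
      ≤ ∫⁻ y, 2 ^ (p - 1) * (edist (v i x) (v i y) ^ p * k x y + crossTerm A v b p k x y) ∂μ :=
        lintegral_mono fun y => h.edist_rpow_mul_le_of_mem hp hx y
    _ = _ := by rw [lintegral_const_mul' _ _ (by simp), lintegral_add_left hmeas]

theorem IsPatching.kernelEnergy_le_add [SFinite μ] [Countable ι] (h : IsPatching A v b u)
    (hp : 1 ≤ p) (hA : ∀ i, MeasurableSet (A i)) (hv : ∀ i, Measurable (v i))
    (hk : Measurable (uncurry k)) :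
    kernelEnergy μ k p u ≤ 2 ^ (p - 1) *
      (∑' i, ∫⁻ x in A i, ∫⁻ y, edist (v i x) (v i y) ^ p * k x y ∂μ ∂μ +
        ∫⁻ x, ∫⁻ y, crossTerm A v b p k x y ∂μ ∂μ) := by
  set G : ι → X → ℝ≥0∞ := fun i x => ∫⁻ y, edist (v i x) (v i y) ^ p * k x y ∂μ
  set C : X → ℝ≥0∞ := fun x => ∫⁻ y, crossTerm A v b p k x y ∂μ
  have hC : Measurable C := (measurable_crossTerm hA hv hk).lintegral_prod_right'
  have hsplit := lintegral_eq_tsum_setLIntegral_add_compl (μ := μ) hA h.pairwise_disjoint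
  calc kernelEnergy μ k p u
      = ∑' i, ∫⁻ x in A i, ∫⁻ y, edist (u x) (u y) ^ p * k x y ∂μ ∂μ +
          ∫⁻ x in (⋃ i, A i)ᶜ, ∫⁻ y, edist (u x) (u y) ^ p * k x y ∂μ ∂μ := hsplit _
    _ ≤ ∑' i, ∫⁻ x in A i, 2 ^ (p - 1) * (G i x + C x) ∂μ + ∫⁻ x in (⋃ i, A i)ᶜ, C x ∂μ := by
        refine add_le_add (ENNReal.tsum_le_tsum fun i => setLIntegral_mono' (hA i) fun x hx =>
          h.lintegral_le_of_mem hp (hv i) hk hx) (setLIntegral_mono' (MeasurableSet.iUnion hA).compl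
            fun x hx => h.lintegral_le_of_notMem_iUnion (by linarith) hx)
    _ = 2 ^ (p - 1) * ∑' i, ∫⁻ x in A i, G i x ∂μ +
          (2 ^ (p - 1) * ∑' i, ∫⁻ x in A i, C x ∂μ + ∫⁻ x in (⋃ i, A i)ᶜ, C x ∂μ) := by
        simp_rw [lintegral_const_mul' _ _ (by simp : (2 : ℝ≥0∞) ^ (p - 1) ≠ ∞),
          lintegral_add_right _ hC, mul_add, ENNReal.tsum_add, ENNReal.tsum_mul_left, add_assoc]
    _ ≤ 2 ^ (p - 1) * ∑' i, ∫⁻ x in A i, G i x ∂μ +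
          2 ^ (p - 1) * (∑' i, ∫⁻ x in A i, C x ∂μ + ∫⁻ x in (⋃ i, A i)ᶜ, C x ∂μ) := by
        rw [mul_add _ (∑' i, _)]
        gcongr
        exact le_mul_of_one_le_left' (one_le_two_rpow_sub_one hp)
    _ = _ := by rw [← hsplit, mul_add]

theorem IsPatching.kernelEnergy_le [SFinite μ] [Countable ι] (h : IsPatching A v b u)
    (hp : 1 ≤ p) (hA : ∀ i, MeasurableSet (A i)) (hv : ∀ i, Measurable (v i))
    (hk : Measurable (uncurry k)) :
    kernelEnergy μ k p u ≤ 2 ^ (p - 1) * ∑' i, kernelEnergy μ k p (v i) := by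
  refine (h.kernelEnergy_le_add hp hA hv hk).trans ?_
  gcongr
  refine (add_le_add_right (h.lintegral_lintegral_crossTerm_le hA hv hk) _).trans_eq ?_
  rw [← ENNReal.tsum_add]
  exact tsum_congr fun i => lintegral_add_compl _ (hA i)

end Patching

theorem gagliardoEnergy_univ_eq_kernelEnergy {m : ℕ} {N : Type} [PseudoMetricSpace N]
    {s p : ℝ} (hp : 0 ≤ p) (v : EuclideanSpace ℝ (Fin m) → N) :
    gagliardoEnergy s p v univ =
      kernelEnergy volume (fun x y => ENNReal.ofReal (‖x - y‖ ^ ((m : ℝ) + s * p))⁻¹) p v := by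
  simp only [gagliardoEnergy, Measure.restrict_univ, kernelEnergy, div_eq_mul_inv]
  congr! 4 with x y
  rw [ENNReal.ofReal_mul (by positivity), ← ENNReal.ofReal_rpow_of_nonneg dist_nonneg hp,
    ← edist_dist]

theorem gagliardo_countable_patching_general {m : ℕ} (s p : ℝ)
    (hp : 1 ≤ p)
    {N : Type} [MetricSpace N] [MeasurableSpace N] [BorelSpace N]
    {I : Type} [Countable I]
    (ui : I → EuclideanSpace ℝ (Fin m) → N) (hui : ∀ i, Measurable (ui i))
    (b : N) (A : I → Set (EuclideanSpace ℝ (Fin m)))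
    (hAopen : ∀ i, IsOpen (A i))
    (hAdisj : ∀ i j, i ≠ j → closure (A i) ∩ closure (A j) = ∅)
    (hbi : ∀ i, ∀ x ∉ A i, ui i x = b)
    (u : EuclideanSpace ℝ (Fin m) → N)
    (hu : ∀ i, ∀ x ∈ A i, u x = ui i x)
    (hub : ∀ x, x ∉ (⋃ i, A i) → u x = b) :
    gagliardoEnergy s p u Set.univ
      ≤ ENNReal.ofReal (2 ^ p) * ∑' i, gagliardoEnergy s p (ui i) Set.univ := by
  have hpatch : IsPatching A ui b u :=
    ⟨fun i j hij => (disjoint_iff_inter_eq_empty.2 (hAdisj i j hij)).mono subset_closure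
      subset_closure, hbi, hu, hub⟩
  have htwo : (2 : ℝ≥0∞) ^ (p - 1) ≤ ENNReal.ofReal (2 ^ p) := by
    rw [← ENNReal.ofReal_rpow_of_pos two_pos, ENNReal.ofReal_ofNat]
    exact ENNReal.rpow_le_rpow_of_exponent_le one_le_two (by linarith)
  simp only [gagliardoEnergy_univ_eq_kernelEnergy (by linarith : 0 ≤ p)]
  exact (hpatch.kernelEnergy_le hp (fun i => (hAopen i).measurableSet) hui (by fun_prop)).trans
    (by gcongr)

/-- Countable patching: gluing countably many maps which all equal a common constant `b`
outside open sets with pairwise disjoint closures. -/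
theorem gagliardo_countable_patching {m : ℕ} (hm : 1 ≤ m) (s p : ℝ)
    (hs : s ∈ Set.Ioo (0 : ℝ) 1) (hp : 1 ≤ p)
    {N : Type} [MetricSpace N] [MeasurableSpace N] [BorelSpace N]
    {I : Type} [Countable I]
    (ui : I → EuclideanSpace ℝ (Fin m) → N) (hui : ∀ i, Measurable (ui i))
    (b : N) (A : I → Set (EuclideanSpace ℝ (Fin m)))
    (hAopen : ∀ i, IsOpen (A i))
    (hAdisj : ∀ i j, i ≠ j → closure (A i) ∩ closure (A j) = ∅)
    (hbi : ∀ i, ∀ x ∉ A i, ui i x = b)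
    (u : EuclideanSpace ℝ (Fin m) → N)
    (hu : ∀ i, ∀ x ∈ A i, u x = ui i x)
    (hub : ∀ x, x ∉ (⋃ i, A i) → u x = b) :
    gagliardoEnergy s p u Set.univ
      ≤ ENNReal.ofReal (2 ^ p) * ∑' i, gagliardoEnergy s p (ui i) Set.univ :=
  gagliardo_countable_patching_general s p hp ui hui b A hAopen hAdisj hbi u hu hub
end

section
/- Let m, N ≥ 1, p ∈ [1,∞), let G assign to each open A ⊆ ℝ^m and measurable u : A → ℝ^N a value G(u,A) ∈ [0,∞], monotone under restriction (A ⊆ B implies G(u|_A, A) ≤ G(u,B)), superadditive on open sets with disjoint closures (G(u, A∪B) ≥ G(u,A) + G(u,B)), and satisfying the scaling law G(u, h + λA) = λ^m · G(u(h+λ·), A) for all λ > 0, h ∈ ℝ^m. If G(u, B^m) < ∞ for every u ∈ L^p(B^m, ℝ^N), then there exists C ≥ 0 such that G(u, B^m) ≤ C(1 + ∫_{B^m} |u|^p) for every u ∈ L^p(B^m, ℝ^N). -/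
/-!
Argue by contradiction. If no constant works, then for every `n` there is `uₙ ∈ Lᵖ` with
`G(uₙ, B) > ρₙ^(-m) (1 + ∫_B |uₙ|ᵖ)`, where `ρₙ = 2⁻ⁿ/4` is the radius of the `n`-th ball of
the disjoint dyadic chain `closedBall ((1 - 2⁻ⁿ) e) ρₙ ⊆ B`. Place the copy `uₙ((x - cₙ)/rₙ)` on
`ball cₙ rₙ`, where `rₙ ≤ ρₙ` is chosen with `rₙ^m (1 + ∫_B |uₙ|ᵖ) = ρₙ^m`. By the scaling law each
copy carries energy at least `1`, while its `Lᵖ` mass is at most `ρₙ^m`, which is summable. The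
glued map `v` is therefore in `Lᵖ`, yet superadditivity and monotonicity give
`G(v, B) ≥ ∑ₙ 1 = ∞`.
-/

open MeasureTheory ENNReal Metric Set Module Function

section Affinity

variable {E : Type*} [NormedAddCommGroup E] [NormedSpace ℝ E]

theorem image_affinity_unitBall (a : E) {r : ℝ} (hr : 0 < r) :
    (fun y => a + r • y) '' ball 0 1 = ball a r := by
  rw [← affinity_unitBall hr, ← image_smul, ← image_vadd, image_image]
  rfl

theorem preimage_affinity_ball (a : E) {r : ℝ} (hr : 0 < r) :
    (fun y => a + r • y) ⁻¹' ball a r = ball 0 1 := by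
  rw [← image_affinity_unitBall a hr, preimage_image_eq]
  intro x y hxy
  exact smul_right_injective E hr.ne' (add_left_cancel hxy)

variable [MeasurableSpace E] [BorelSpace E] [FiniteDimensional ℝ E] (μ : Measure E)
  [μ.IsAddHaarMeasure]

theorem map_affinity_addHaar (a : E) {r : ℝ} (hr : r ≠ 0) :
    μ.map (fun y => a + r • y) = ENNReal.ofReal |(r ^ finrank ℝ E)⁻¹| • μ := by
  have hcomp : (fun y : E => a + r • y) = (a + ·) ∘ (r • ·) := rfl
  rw [hcomp, ← Measure.map_map (measurable_const_add a) (measurable_const_smul r),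
    Measure.map_addHaar_smul μ hr, Measure.map_smul, (measurePreserving_add_left μ a).map_eq]

theorem setLIntegral_ball_eq_mul_unitBall {f : E → ℝ≥0∞} (hf : Measurable f) (a : E) {r : ℝ}
    (hr : 0 < r) :
    ∫⁻ x in ball a r, f x ∂μ
      = ENNReal.ofReal (r ^ finrank ℝ E) * ∫⁻ y in ball 0 1, f (a + r • y) ∂μ := by
  have hrd : 0 < r ^ finrank ℝ E := by positivity
  have hmap := setLIntegral_map (μ := μ) measurableSet_ball hf
    ((measurable_const_smul r).const_add a) (s := ball a r)
  rw [preimage_affinity_ball a hr, map_affinity_addHaar μ a hr.ne', Measure.restrict_smul,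
    lintegral_smul_measure, smul_eq_mul, abs_of_pos (inv_pos.2 hrd)] at hmap
  rw [← hmap, ← mul_assoc, ← ENNReal.ofReal_mul hrd.le, mul_inv_cancel₀ hrd.ne',
    ENNReal.ofReal_one, one_mul]

end Affinity

noncomputable section DyadicBalls

variable {E : Type*} [NormedAddCommGroup E] [NormedSpace ℝ E] {e : E}

def dyadicCenter (e : E) (n : ℕ) : E := (1 - (2⁻¹ : ℝ) ^ n) • e

def dyadicRadius (n : ℕ) : ℝ := (2⁻¹ : ℝ) ^ n / 4

theorem dyadicRadius_pos (n : ℕ) : 0 < dyadicRadius n := by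
  unfold dyadicRadius; positivity

theorem dyadicRadius_le_one (n : ℕ) : dyadicRadius n ≤ 1 := by
  have : (2⁻¹ : ℝ) ^ n ≤ 1 := pow_le_one₀ (by norm_num) (by norm_num)
  unfold dyadicRadius; linarith

theorem dist_dyadicCenter (he : ‖e‖ = 1) (i j : ℕ) :
    dist (dyadicCenter e i) (dyadicCenter e j) = |(2⁻¹ : ℝ) ^ j - (2⁻¹ : ℝ) ^ i| := by
  rw [dist_eq_norm, dyadicCenter, dyadicCenter, ← sub_smul, norm_smul, he, mul_one,
    Real.norm_eq_abs]
  congr 1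
  ring

theorem closedBall_dyadic_subset_unitBall (he : ‖e‖ = 1) (n : ℕ) :
    closedBall (dyadicCenter e n) (dyadicRadius n) ⊆ ball 0 1 := by
  have h0 : dyadicCenter e 0 = 0 := by simp [dyadicCenter]
  intro x hx
  have hdist := dist_dyadicCenter he n 0
  have ht : 0 < (2⁻¹ : ℝ) ^ n := by positivity
  have ht1 : (2⁻¹ : ℝ) ^ n ≤ 1 := pow_le_one₀ (by norm_num) (by norm_num)
  rw [h0, pow_zero, abs_of_nonneg (by linarith)] at hdist
  rw [mem_closedBall, dyadicRadius] at hx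
  rw [mem_ball]
  linarith [dist_triangle x (dyadicCenter e n) 0]

theorem pairwise_disjoint_closedBall_dyadic (he : ‖e‖ = 1) :
    Pairwise (Disjoint on fun n => closedBall (dyadicCenter e n) (dyadicRadius n)) := by
  refine (pairwise_disjoint_on _).2 fun i j hij => closedBall_disjoint_closedBall ?_
  have hji : (2⁻¹ : ℝ) ^ j ≤ (2⁻¹ : ℝ) ^ (i + 1) :=
    pow_le_pow_of_le_one (by norm_num) (by norm_num) hij
  have ht : 0 < (2⁻¹ : ℝ) ^ i := by positivity
  rw [pow_succ] at hji
  rw [dist_dyadicCenter he, abs_of_nonpos (by linarith), dyadicRadius, dyadicRadius]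
  linarith

theorem pairwise_disjoint_closure_ball_dyadic (he : ‖e‖ = 1) {r : ℕ → ℝ}
    (hr : ∀ n, r n ≤ dyadicRadius n) :
    Pairwise (Disjoint on fun n => closure (ball (dyadicCenter e n) (r n))) := by
  have hsub : ∀ n, closure (ball (dyadicCenter e n) (r n))
      ⊆ closedBall (dyadicCenter e n) (dyadicRadius n) := fun n =>
    closure_ball_subset_closedBall.trans (closedBall_subset_closedBall (hr n))
  exact fun i j hij => (pairwise_disjoint_closedBall_dyadic he hij).mono (hsub i) (hsub j)

theorem ball_dyadic_subset_unitBall (he : ‖e‖ = 1) {n : ℕ} {r : ℝ} (hr : r ≤ dyadicRadius n) :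
    ball (dyadicCenter e n) r ⊆ ball 0 1 :=
  ball_subset_closedBall.trans
    ((closedBall_subset_closedBall hr).trans (closedBall_dyadic_subset_unitBall he n))

theorem tsum_ofReal_dyadicRadius_pow_lt_top {k : ℕ} (hk : k ≠ 0) :
    ∑' n, ENNReal.ofReal (dyadicRadius n ^ k) < ⊤ := by
  have hsum : Summable dyadicRadius :=
    (summable_geometric_of_lt_one (by norm_num) (by norm_num)).div_const 4
  calc ∑' n, ENNReal.ofReal (dyadicRadius n ^ k)
      ≤ ∑' n, ENNReal.ofReal (dyadicRadius n) := ENNReal.tsum_le_tsum fun n =>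
        ofReal_le_ofReal (pow_le_of_le_one (dyadicRadius_pos n).le (dyadicRadius_le_one n) hk)
    _ = ENNReal.ofReal (∑' n, dyadicRadius n) :=
        (ofReal_tsum_of_nonneg (fun n => (dyadicRadius_pos n).le) hsum).symm
    _ < ⊤ := ofReal_lt_top

end DyadicBalls

noncomputable section Glue

variable {α F F' : Type*} [AddCommMonoid F] [TopologicalSpace F]
  {B : ℕ → Set α} {w : ℕ → α → F} {x : α}

def glue (B : ℕ → Set α) (w : ℕ → α → F) (x : α) : F := ∑' n, (B n).indicator (w n) x

theorem glue_eq_of_mem (hB : Pairwise (Disjoint on B)) {n : ℕ} (hx : x ∈ B n) :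
    glue B w x = w n x := by
  rw [glue, tsum_eq_single n fun k hk => indicator_of_notMem
    (disjoint_left.1 (hB hk.symm) hx) _, indicator_of_mem hx]

theorem glue_eq_zero (hx : ∀ n, x ∉ B n) : glue B w x = 0 := by
  simp [glue, indicator_of_notMem (hx _)]

theorem apply_glue [AddCommMonoid F'] [TopologicalSpace F'] (hB : Pairwise (Disjoint on B))
    {g : F → F'} (hg : g 0 = 0) (x : α) : g (glue B w x) = glue B (fun n => g ∘ w n) x := by
  by_cases hx : ∃ n, x ∈ B n
  · obtain ⟨n, hn⟩ := hx
    rw [glue_eq_of_mem hB hn, glue_eq_of_mem hB hn, comp_apply]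
  · push Not at hx
    rw [glue_eq_zero hx, glue_eq_zero hx, hg]

theorem hasSum_glue (hB : Pairwise (Disjoint on B)) (x : α) :
    HasSum (fun n => (B n).indicator (w n) x) (glue B w x) := by
  by_cases hx : ∃ n, x ∈ B n
  · obtain ⟨n, hn⟩ := hx
    rw [glue_eq_of_mem hB hn, ← indicator_of_mem hn (w n)]
    exact hasSum_single n fun k hk => indicator_of_notMem (disjoint_left.1 (hB hk.symm) hn) _
  · push Not at hx
    simp only [glue_eq_zero hx, indicator_of_notMem (hx _)]
    exact hasSum_zero

theorem measurable_glue [MeasurableSpace α] [MeasurableSpace F] [BorelSpace F]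
    [TopologicalSpace.PseudoMetrizableSpace F] [MeasurableAdd₂ F]
    (hB : Pairwise (Disjoint on B)) (hBm : ∀ n, MeasurableSet (B n))
    (hw : ∀ n, Measurable (w n)) : Measurable (glue B w) := by
  refine measurable_of_tendsto_metrizable
    (f := fun k x => ∑ n ∈ Finset.range k, (B n).indicator (w n) x)
    (fun k => Finset.measurable_sum _ fun n _ => (hw n).indicator (hBm n)) ?_
  exact tendsto_pi_nhds.2 fun x => (hasSum_glue hB x).tendsto_sum_nat

theorem lintegral_glue [MeasurableSpace α] {μ : Measure α} (hBm : ∀ n, MeasurableSet (B n))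
    {f : ℕ → α → ℝ≥0∞} (hf : ∀ n, Measurable (f n)) :
    ∫⁻ x, glue B f x ∂μ = ∑' n, ∫⁻ x in B n, f n x ∂μ := by
  simp only [glue]
  rw [lintegral_tsum fun n => ((hf n).indicator (hBm n)).aemeasurable]
  simp only [lintegral_indicator (hBm _)]

end Glue

section Superadditive

variable {X : Type*} [TopologicalSpace X] {g : Set X → ℝ≥0∞} {B : ℕ → Set X}

theorem sum_le_biUnion_of_superadditive
    (hsuper : ∀ A A', IsOpen A → IsOpen A' → closure A ∩ closure A' = ∅ → g A + g A' ≤ g (A ∪ A'))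
    (hB : ∀ n, IsOpen (B n)) (hdisj : Pairwise (Disjoint on fun n => closure (B n))) (n : ℕ) :
    ∑ k ∈ Finset.range n, g (B k) ≤ g (⋃ k ∈ Finset.range n, B k) := by
  induction n with
  | zero => simp
  | succ n ih =>
    have hclosure : closure (⋃ k ∈ Finset.range n, B k) ∩ closure (B n) = ∅ := by
      rw [Finset.closure_biUnion, ← disjoint_iff_inter_eq_empty, disjoint_iUnion₂_left]
      exact fun k hk => hdisj (Finset.mem_range.1 hk).ne
    rw [Finset.sum_range_succ, Finset.range_add_one, Finset.set_biUnion_insert, union_comm]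
    exact (add_le_add_left ih _).trans
      (hsuper _ _ (isOpen_biUnion fun k _ => hB k) (hB n) hclosure)

theorem tsum_le_of_superadditive
    (hmono : ∀ A A', IsOpen A → IsOpen A' → A ⊆ A' → g A ≤ g A')
    (hsuper : ∀ A A', IsOpen A → IsOpen A' → closure A ∩ closure A' = ∅ → g A + g A' ≤ g (A ∪ A'))
    (hB : ∀ n, IsOpen (B n)) (hdisj : Pairwise (Disjoint on fun n => closure (B n)))
    {U : Set X} (hU : IsOpen U) (hBU : ∀ n, B n ⊆ U) : ∑' n, g (B n) ≤ g U :=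
  ENNReal.tsum_le_of_sum_range_le fun n =>
    (sum_le_biUnion_of_superadditive hsuper hB hdisj n).trans
      (hmono _ _ (isOpen_biUnion fun k _ => hB k) hU (iUnion₂_subset fun k _ => hBU k))

end Superadditive

noncomputable section Rescale

variable {E F : Type*} [NormedAddCommGroup E] [NormedSpace ℝ E]

def rescale (c : E) (r : ℝ) (u : E → F) (x : E) : F := u (r⁻¹ • (x - c))

theorem rescale_affinity {c : E} {r : ℝ} (hr : r ≠ 0) (u : E → F) (y : E) :
    rescale c r u (c + r • y) = u y := by
  rw [rescale, add_sub_cancel_left, inv_smul_smul₀ hr]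

theorem Measurable.rescale [MeasurableSpace E] [BorelSpace E] [MeasurableSpace F] {u : E → F}
    (hu : Measurable u) (c : E) (r : ℝ) : Measurable (rescale c r u) :=
  hu.comp ((measurable_id.sub_const c).const_smul r⁻¹)

variable [AddCommMonoid F] [TopologicalSpace F] {c : ℕ → E} {r : ℕ → ℝ}

theorem glue_rescale_affinity (hr : ∀ n, 0 < r n)
    (hdisj : Pairwise (Disjoint on fun n => ball (c n) (r n))) (u : ℕ → E → F) (n : ℕ)
    {y : E} (hy : y ∈ ball 0 1) :
    glue (fun n => ball (c n) (r n)) (fun n => rescale (c n) (r n) (u n)) (c n + r n • y)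
      = u n y := by
  have hmem : c n + r n • y ∈ ball (c n) (r n) := by
    rw [← image_affinity_unitBall (c n) (hr n)]
    exact mem_image_of_mem _ hy
  rw [glue_eq_of_mem hdisj hmem, rescale_affinity (hr n).ne']

variable [MeasurableSpace E] [BorelSpace E] [FiniteDimensional ℝ E] (μ : Measure E)
  [μ.IsAddHaarMeasure] [MeasurableSpace F]

theorem lintegral_comp_glue_rescale (hr : ∀ n, 0 < r n)
    (hdisj : Pairwise (Disjoint on fun n => ball (c n) (r n))) {u : ℕ → E → F}
    (hu : ∀ n, Measurable (u n)) {g : F → ℝ≥0∞} (hg : Measurable g) (hg0 : g 0 = 0) :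
    ∫⁻ x, g (glue (fun n => ball (c n) (r n)) (fun n => rescale (c n) (r n) (u n)) x) ∂μ
      = ∑' n, ENNReal.ofReal (r n ^ finrank ℝ E) * ∫⁻ y in ball 0 1, g (u n y) ∂μ := by
  rw [lintegral_congr (apply_glue hdisj hg0),
    lintegral_glue (fun n => measurableSet_ball) fun n => hg.comp ((hu n).rescale _ _)]
  congr 1
  ext n
  rw [setLIntegral_ball_eq_mul_unitBall μ (hg.comp ((hu n).rescale _ _)) _ (hr n)]
  simp only [comp_apply, rescale_affinity (hr n).ne']

end Rescale

theorem energy_ball_eq_of_affinity {E F : Type*} [NormedAddCommGroup E] [NormedSpace ℝ E]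
    {G : (E → F) → Set E → ℝ≥0∞} {k : ℕ}
    (hlocal : ∀ u v A, (∀ x ∈ A, u x = v x) → G u A = G v A)
    (hscale : ∀ u (lam : ℝ), 0 < lam → ∀ h : E, ∀ A : Set E, IsOpen A →
      G u ((fun x => h + lam • x) '' A) = ENNReal.ofReal (lam ^ k) * G (fun x => u (h + lam • x)) A)
    {u v : E → F} {c : E} {r : ℝ} (hr : 0 < r) (hvu : ∀ y ∈ ball 0 1, v (c + r • y) = u y) :
    G v (ball c r) = ENNReal.ofReal (r ^ k) * G u (ball 0 1) := by
  rw [← image_affinity_unitBall c hr, hscale v r hr c _ isOpen_ball, hlocal _ u _ hvu]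

theorem memLp_ofReal_iff_lintegral_lt_top {α F : Type*} [MeasurableSpace α] {μ : Measure α}
    [NormedAddCommGroup F] {p : ℝ} (hp : 0 < p) {f : α → F} (hf : AEStronglyMeasurable f μ) :
    MemLp f (ENNReal.ofReal p) μ ↔ ∫⁻ x, ‖f x‖ₑ ^ p ∂μ < ⊤ := by
  rw [MemLp, and_iff_right hf, eLpNorm_lt_top_iff_lintegral_rpow_enorm_lt_top
    (by simpa using hp) ofReal_ne_top, toReal_ofReal hp.le]

theorem exists_pos_le_ofReal_pow_mul_eq {k : ℕ} (hk : k ≠ 0) {ρ : ℝ} (hρ : 0 < ρ) {a : ℝ≥0∞}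
    (ha : 1 ≤ a) (ha_top : a ≠ ⊤) :
    ∃ r : ℝ, 0 < r ∧ r ≤ ρ ∧ ENNReal.ofReal (r ^ k) * a = ENNReal.ofReal (ρ ^ k) := by
  have ha' : 1 ≤ a.toReal := by simpa using ENNReal.toReal_mono ha_top ha
  have hroot : 1 ≤ a.toReal ^ (k⁻¹ : ℝ) := Real.one_le_rpow ha' (by positivity)
  refine ⟨ρ / a.toReal ^ (k⁻¹ : ℝ), by positivity, div_le_self hρ.le hroot, ?_⟩
  nth_rw 2 [← ofReal_toReal ha_top]
  rw [← ENNReal.ofReal_mul (by positivity), div_pow,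
    Real.rpow_inv_natCast_pow (by positivity) hk, div_mul_cancel₀ _ (by positivity)]

theorem exists_energy_eq_top_of_unbounded {E F : Type*} [NormedAddCommGroup E]
    [NormedSpace ℝ E] [MeasurableSpace E] [BorelSpace E] [FiniteDimensional ℝ E] [Nontrivial E]
    (μ : Measure E) [μ.IsAddHaarMeasure] [NormedAddCommGroup F] [MeasurableSpace F]
    [BorelSpace F] [SecondCountableTopology F] {p : ℝ} (hp : 0 < p)
    {G : (E → F) → Set E → ℝ≥0∞}
    (hlocal : ∀ u v A, (∀ x ∈ A, u x = v x) → G u A = G v A)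
    (hmono : ∀ u (A A' : Set E), IsOpen A → IsOpen A' → A ⊆ A' → G u A ≤ G u A')
    (hsuper : ∀ u (A A' : Set E), IsOpen A → IsOpen A' → closure A ∩ closure A' = ∅ →
      G u A + G u A' ≤ G u (A ∪ A'))
    (hscale : ∀ u (lam : ℝ), 0 < lam → ∀ h : E, ∀ A : Set E, IsOpen A →
      G u ((fun x => h + lam • x) '' A)
        = ENNReal.ofReal (lam ^ finrank ℝ E) * G (fun x => u (h + lam • x)) A)
    (hunb : ∀ C : ℝ, 0 ≤ C → ∃ u : E → F, Measurable u ∧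
      ∫⁻ x in ball 0 1, ‖u x‖ₑ ^ p ∂μ < ⊤ ∧
      ENNReal.ofReal C * (1 + ∫⁻ x in ball 0 1, ‖u x‖ₑ ^ p ∂μ) < G u (ball 0 1)) :
    ∃ v : E → F, Measurable v ∧ ∫⁻ x in ball 0 1, ‖v x‖ₑ ^ p ∂μ < ⊤ ∧ G v (ball 0 1) = ⊤ := by
  set d := finrank ℝ E
  have hd : d ≠ 0 := finrank_pos.ne'
  obtain ⟨e, he⟩ := exists_norm_eq E zero_le_one
  set c := dyadicCenter e
  set ρ : ℕ → ℝ := dyadicRadius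
  choose u hu_meas hu_fin hu_big using fun n =>
    hunb (ρ n ^ d)⁻¹ (inv_nonneg.2 (pow_nonneg (dyadicRadius_pos n).le d))
  choose r hr_pos hr_le hr_eq using fun n =>
    exists_pos_le_ofReal_pow_mul_eq hd (dyadicRadius_pos n) le_self_add
      (add_ne_top.2 ⟨one_ne_top, (hu_fin n).ne⟩)
  have hdisj := pairwise_disjoint_closure_ball_dyadic he hr_le
  have hdisj' : Pairwise (Disjoint on fun n => ball (c n) (r n)) := fun i j hij =>
    (hdisj hij).mono subset_closure subset_closure
  set v := glue (fun n => ball (c n) (r n)) fun n => rescale (c n) (r n) (u n)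
  have hG : ∀ n, 1 ≤ G v (ball (c n) (r n)) := by
    intro n
    rw [energy_ball_eq_of_affinity hlocal hscale (hr_pos n) fun y =>
      glue_rescale_affinity hr_pos hdisj' u n]
    calc (1 : ℝ≥0∞) = ENNReal.ofReal (ρ n ^ d) * ENNReal.ofReal (ρ n ^ d)⁻¹ := by
          rw [← ENNReal.ofReal_mul (pow_nonneg (dyadicRadius_pos n).le d),
            mul_inv_cancel₀ (pow_pos (dyadicRadius_pos n) d).ne', ofReal_one]
      _ = ENNReal.ofReal (r n ^ d) *
            (ENNReal.ofReal (ρ n ^ d)⁻¹ * (1 + ∫⁻ x in ball 0 1, ‖u n x‖ₑ ^ p ∂μ)) := by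
          rw [← hr_eq n]; ring
      _ ≤ ENNReal.ofReal (r n ^ d) * G (u n) (ball 0 1) := by gcongr; exact (hu_big n).le
  refine ⟨v, measurable_glue hdisj' (fun n => measurableSet_ball) fun n => (hu_meas n).rescale _ _,
    ?_, top_unique ?_⟩
  · calc ∫⁻ x in ball 0 1, ‖v x‖ₑ ^ p ∂μ ≤ ∫⁻ x, ‖v x‖ₑ ^ p ∂μ := setLIntegral_le_lintegral _ _
      _ = ∑' n, ENNReal.ofReal (r n ^ d) * ∫⁻ y in ball 0 1, ‖u n y‖ₑ ^ p ∂μ :=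
          lintegral_comp_glue_rescale μ hr_pos hdisj' hu_meas (g := fun y => ‖y‖ₑ ^ p)
            (by fun_prop) (by simp [hp])
      _ ≤ ∑' n, ENNReal.ofReal (ρ n ^ d) := ENNReal.tsum_le_tsum fun n =>
          hr_eq n ▸ mul_le_mul_right le_add_self _
      _ < ⊤ := tsum_ofReal_dyadicRadius_pow_lt_top hd
  · calc ⊤ = ∑' _ : ℕ, (1 : ℝ≥0∞) := (tsum_const_eq_top_of_ne_zero one_ne_zero).symm
      _ ≤ ∑' n, G v (ball (c n) (r n)) := ENNReal.tsum_le_tsum hG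
      _ ≤ G v (ball 0 1) := tsum_le_of_superadditive (hmono v) (hsuper v)
          (fun n => isOpen_ball) hdisj isOpen_ball fun n => ball_dyadic_subset_unitBall he (hr_le n)

theorem uniform_boundedness_Lp_general {m N : ℕ} (hm : 1 ≤ m) (p : ℝ) (hp : 1 ≤ p)
    (G : (EuclideanSpace ℝ (Fin m) → EuclideanSpace ℝ (Fin N)) →
      Set (EuclideanSpace ℝ (Fin m)) → ℝ≥0∞)
    (hlocal : ∀ u v A, (∀ x ∈ A, u x = v x) → G u A = G v A)
    (hmono : ∀ u (A B : Set (EuclideanSpace ℝ (Fin m))), IsOpen A → IsOpen B → A ⊆ B →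
      G u A ≤ G u B)
    (hsuper : ∀ u (A B : Set (EuclideanSpace ℝ (Fin m))), IsOpen A → IsOpen B →
      closure A ∩ closure B = ∅ → G u A + G u B ≤ G u (A ∪ B))
    (hscale : ∀ u (lam : ℝ), 0 < lam → ∀ h : EuclideanSpace ℝ (Fin m),
      ∀ A : Set (EuclideanSpace ℝ (Fin m)), IsOpen A →
      G u ((fun x => h + lam • x) '' A)
        = ENNReal.ofReal (lam ^ (m : ℕ)) * G (fun x => u (h + lam • x)) A)
    (hfin : ∀ u : EuclideanSpace ℝ (Fin m) → EuclideanSpace ℝ (Fin N),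
      Measurable u →
      MemLp u (ENNReal.ofReal p)
        (volume.restrict (ball (0 : EuclideanSpace ℝ (Fin m)) 1)) →
      G u (ball 0 1) < ⊤) :
    ∃ C : ℝ, 0 ≤ C ∧
      ∀ u : EuclideanSpace ℝ (Fin m) → EuclideanSpace ℝ (Fin N),
        Measurable u →
        MemLp u (ENNReal.ofReal p)
          (volume.restrict (ball (0 : EuclideanSpace ℝ (Fin m)) 1)) →
        G u (ball 0 1)
          ≤ ENNReal.ofReal C *
              (1 + ∫⁻ x in ball (0 : EuclideanSpace ℝ (Fin m)) 1,
                (‖u x‖₊ : ℝ≥0∞) ^ p) := by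
  have hp0 : 0 < p := zero_lt_one.trans_le hp
  have : NeZero m := ⟨by omega⟩
  have hmemLp : ∀ u : EuclideanSpace ℝ (Fin m) → EuclideanSpace ℝ (Fin N), Measurable u →
      (MemLp u (ENNReal.ofReal p) (volume.restrict (ball 0 1)) ↔
        ∫⁻ x in ball 0 1, ‖u x‖ₑ ^ p < ⊤) := fun u hu =>
    memLp_ofReal_iff_lintegral_lt_top hp0 hu.aestronglyMeasurable
  by_contra! hC
  obtain ⟨v, hv_meas, hv_int, hv_top⟩ := exists_energy_eq_top_of_unbounded volume hp0 hlocal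
    hmono hsuper (by simpa only [finrank_euclideanSpace_fin] using hscale) fun C hC0 => by
      obtain ⟨u, hu_meas, hu_mem, hu_big⟩ := hC C hC0
      exact ⟨u, hu_meas, (hmemLp u hu_meas).1 hu_mem, hu_big⟩
  exact (hfin v hv_meas ((hmemLp v hv_meas).2 hv_int)).ne hv_top

/-- Nonlinear uniform boundedness principle in `L^p`: a local, superadditive energy with
`m`-homogeneous scaling which is finite on all of `L^p(B^m, ℝ^N)` satisfies a uniform
linear bound by the `L^p` energy. -/
theorem uniform_boundedness_Lp {m N : ℕ} (hm : 1 ≤ m) (hN : 1 ≤ N) (p : ℝ) (hp : 1 ≤ p)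
    (G : (EuclideanSpace ℝ (Fin m) → EuclideanSpace ℝ (Fin N)) →
      Set (EuclideanSpace ℝ (Fin m)) → ℝ≥0∞)
    (hlocal : ∀ u v A, (∀ x ∈ A, u x = v x) → G u A = G v A)
    (hmono : ∀ u (A B : Set (EuclideanSpace ℝ (Fin m))), IsOpen A → IsOpen B → A ⊆ B →
      G u A ≤ G u B)
    (hsuper : ∀ u (A B : Set (EuclideanSpace ℝ (Fin m))), IsOpen A → IsOpen B →
      closure A ∩ closure B = ∅ → G u A + G u B ≤ G u (A ∪ B))
    (hscale : ∀ u (lam : ℝ), 0 < lam → ∀ h : EuclideanSpace ℝ (Fin m),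
      ∀ A : Set (EuclideanSpace ℝ (Fin m)), IsOpen A →
      G u ((fun x => h + lam • x) '' A)
        = ENNReal.ofReal (lam ^ (m : ℕ)) * G (fun x => u (h + lam • x)) A)
    (hfin : ∀ u : EuclideanSpace ℝ (Fin m) → EuclideanSpace ℝ (Fin N),
      Measurable u →
      MemLp u (ENNReal.ofReal p)
        (volume.restrict (ball (0 : EuclideanSpace ℝ (Fin m)) 1)) →
      G u (ball 0 1) < ⊤) :
    ∃ C : ℝ, 0 ≤ C ∧
      ∀ u : EuclideanSpace ℝ (Fin m) → EuclideanSpace ℝ (Fin N),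
        Measurable u →
        MemLp u (ENNReal.ofReal p)
          (volume.restrict (ball (0 : EuclideanSpace ℝ (Fin m)) 1)) →
        G u (ball 0 1)
          ≤ ENNReal.ofReal C *
              (1 + ∫⁻ x in ball (0 : EuclideanSpace ℝ (Fin m)) 1,
                (‖u x‖₊ : ℝ≥0∞) ^ p) :=
  uniform_boundedness_Lp_general hm p hp G hlocal hmono hsuper hscale hfin
end
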